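/- arXiv:2101.12571 — 4 statements merged into one kernel-verified Lean document; each statement's English description precedes it below -/
import Mathlib

section
/- Let (Ω_x, ν) be a measure space and (Ω_v, μ) a finite measure space. Let X₁, …, X_r be an orthonormal family in L²(ν) and V₁, …, V_r an orthonormal family in L²(μ), and suppose there exist real coefficients c₁, …, c_r with 1 = Σ_{j=1}^r c_j V_j μ-almost everywhere. Let D : Ω_x × Ω_v → ℝ be integrable with respect to ν ⊗ μ, such that for ν-a.e. x the functions v ↦ D(x,v) and v ↦ V_j(v) D(x,v) are μ-integrable for all j, and such that X_i V_j D and X_i D are ν ⊗ μ-integrable for all i, j. Then for ν-a.e. x: Σ_j (∫_{Ω_v} V_j D(x,·) dμ)(∫_{Ω_v} V_j dμ) − Σ_{i,j} X_i(x) (∫∫ X_i V_j D d(ν⊗μ))(∫_{Ω_v} V_j dμ) + Σ_i X_i(x) (∫∫ X_i D d(ν⊗μ)) = ∫_{Ω_v} D(x,v) dμ(v). -/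
open MeasureTheory Filter
open scoped Topology

/-- If the constant function `1` lies in the span of the orthonormal velocity basis
functions `V j`, then the three-term expression for the time derivative of the density in
the classical dynamical low-rank approximation collapses to `∫ D dμ`. -/
theorem classic_dlr_density_identity
    {Ωx Ωv : Type*} [MeasurableSpace Ωx] [MeasurableSpace Ωv]
    (ν : Measure Ωx) (μ : Measure Ωv) [IsFiniteMeasure μ]
    (r : ℕ) (X : Fin r → Ωx → ℝ) (V : Fin r → Ωv → ℝ)
    (hX2 : ∀ i, MemLp (X i) 2 ν)
    (hV2 : ∀ j, MemLp (V j) 2 μ)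
    (hXortho : ∀ i j, (∫ x, X i x * X j x ∂ν) = if i = j then 1 else 0)
    (hVortho : ∀ i j, (∫ v, V i v * V j v ∂μ) = if i = j then 1 else 0)
    (c : Fin r → ℝ)
    (hc : (fun _ : Ωv => (1 : ℝ)) =ᵐ[μ] fun v => ∑ j, c j * V j v)
    (D : Ωx → Ωv → ℝ)
    (hD : Integrable (fun p : Ωx × Ωv => D p.1 p.2) (ν.prod μ))
    (hDx : ∀ᵐ x ∂ν, Integrable (fun v => D x v) μ)
    (hVD : ∀ j, ∀ᵐ x ∂ν, Integrable (fun v => V j v * D x v) μ)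
    (hXVD : ∀ i j, Integrable (fun p : Ωx × Ωv => X i p.1 * V j p.2 * D p.1 p.2) (ν.prod μ))
    (hXD : ∀ i, Integrable (fun p : Ωx × Ωv => X i p.1 * D p.1 p.2) (ν.prod μ)) :
    ∀ᵐ x ∂ν,
      (∑ j, (∫ v, V j v * D x v ∂μ) * (∫ v, V j v ∂μ))
        - (∑ i, ∑ j, X i x *
            ((∫ p : Ωx × Ωv, X i p.1 * V j p.2 * D p.1 p.2 ∂(ν.prod μ)) * (∫ v, V j v ∂μ)))
        + (∑ i, X i x * (∫ p : Ωx × Ωv, X i p.1 * D p.1 p.2 ∂(ν.prod μ)))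
      = ∫ v, D x v ∂μ := by
    classical
  have hVint : ∀ j, Integrable (V j) μ := fun j => (hV2 j).integrable (by norm_num)
  have hVV : ∀ j k, Integrable (fun v => V j v * V k v) μ := fun j k => by
    have h := ((hV2 k).smul (hV2 j) (r := 1) : MemLp (V j • V k) 1 μ)
    simpa [Pi.smul_apply, smul_eq_mul, Pi.mul_def] using memLp_one_iff_integrable.mp h
  -- ∫ V j = c j
  have hcj : ∀ j, (∫ v, V j v ∂μ) = c j := by
    intro j
    have h1 : (∫ v, V j v ∂μ) = ∫ v, ∑ k, c k * (V j v * V k v) ∂μ := by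
      refine integral_congr_ae ?_
      filter_upwards [hc] with v hv
      calc V j v = V j v * (1 : ℝ) := (mul_one _).symm
        _ = V j v * ∑ k, c k * V k v := by rw [← hv]
        _ = ∑ k, c k * (V j v * V k v) := by rw [Finset.mul_sum]; exact Finset.sum_congr rfl fun k _ => by ring
    rw [h1, integral_finset_sum]
    · simp only [integral_const_mul, hVortho]
      simp
    · exact fun k _ => ((hVV j k).const_mul (c k))
  -- second term equals third term componentwise
  have hsnd : Measure.QuasiMeasurePreserving (Prod.snd : Ωx × Ωv → Ωv) (ν.prod μ) μ :=
    Measure.quasiMeasurePreserving_snd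
  have hc' : (fun _ : Ωx × Ωv => (1 : ℝ)) =ᵐ[ν.prod μ] fun p => ∑ j, c j * V j p.2 :=
    hsnd.ae_eq hc
  have hterm23 : ∀ i, ∑ j, (c j) * (∫ p : Ωx × Ωv, X i p.1 * V j p.2 * D p.1 p.2 ∂(ν.prod μ))
      = ∫ p : Ωx × Ωv, X i p.1 * D p.1 p.2 ∂(ν.prod μ) := by
    intro i
    have h1 : (∫ p : Ωx × Ωv, X i p.1 * D p.1 p.2 ∂(ν.prod μ))
        = ∫ p : Ωx × Ωv, ∑ j, c j * (X i p.1 * V j p.2 * D p.1 p.2) ∂(ν.prod μ) := by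
      refine integral_congr_ae ?_
      filter_upwards [hc'] with p hp
      calc X i p.1 * D p.1 p.2 = X i p.1 * (1 : ℝ) * D p.1 p.2 := by ring
        _ = X i p.1 * (∑ j, c j * V j p.2) * D p.1 p.2 := by rw [← hp]
        _ = ∑ j, c j * (X i p.1 * V j p.2 * D p.1 p.2) := by
            rw [Finset.mul_sum, Finset.sum_mul]; exact Finset.sum_congr rfl fun j _ => by ring
    rw [h1, integral_finset_sum]
    · simp only [integral_const_mul]
    · exact fun j _ => ((hXVD i j).const_mul (c j))
  filter_upwards [hDx, ae_all_iff.2 hVD] with x hDxi hVDx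
  -- first term equals ∫ D x
  have h1 : (∑ j, (∫ v, V j v * D x v ∂μ) * (∫ v, V j v ∂μ)) = ∫ v, D x v ∂μ := by
    have h2 : (∫ v, D x v ∂μ) = ∫ v, ∑ j, c j * (V j v * D x v) ∂μ := by
      refine integral_congr_ae ?_
      filter_upwards [hc] with v hv
      calc D x v = (1 : ℝ) * D x v := (one_mul _).symm
        _ = (∑ j, c j * V j v) * D x v := by rw [← hv]
        _ = ∑ j, c j * (V j v * D x v) := by rw [Finset.sum_mul]; exact Finset.sum_congr rfl fun j _ => by ring
    rw [h2, integral_finset_sum]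
    · refine Finset.sum_congr rfl fun j _ => ?_
      rw [integral_const_mul, hcj j]; ring
    · exact fun j _ => ((hVDx j).const_mul (c j))
  have h3 : (∑ i, ∑ j, X i x *
      ((∫ p : Ωx × Ωv, X i p.1 * V j p.2 * D p.1 p.2 ∂(ν.prod μ)) * (∫ v, V j v ∂μ)))
      = ∑ i, X i x * (∫ p : Ωx × Ωv, X i p.1 * D p.1 p.2 ∂(ν.prod μ)) := by
    refine Finset.sum_congr rfl fun i _ => ?_
    rw [← Finset.mul_sum, ← hterm23 i]
    congr 1
    exact Finset.sum_congr rfl fun j _ => by rw [hcj j]; ring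
  rw [h1, h3]; ring
end

section
/- Let L > 0 and τ > 0. Let κⁿ, κⁿ⁺¹ : ℝ/Lℤ → ℝ be continuous (the kinetic energy densities), Qⁿ : ℝ/Lℤ → ℝ be C¹, and suppose the discrete kinetic energy update κⁿ⁺¹(x) = κⁿ(x) − τ ∂ₓQⁿ(x) − τ Eⁿ(x) jⁿ(x) holds. Let φⁿ : ℝ/Lℤ → ℝ be C² with Eⁿ = −∂ₓφⁿ, let Eⁿ⁺¹ : ℝ/Lℤ → ℝ be C¹, suppose ∂ₓEⁿ = 1 − ρⁿ and ∂ₓEⁿ⁺¹ = 1 − ρⁿ⁺¹ for continuous ρⁿ, ρⁿ⁺¹, let jⁿ be C¹, and suppose (ρⁿ⁺¹ − ρⁿ)/τ + ∂ₓjⁿ = 0. Define the total energies ℰᵐ = ∫₀ᴸ κᵐ(x) dx + ½ ∫₀ᴸ Eᵐ(x)² dx for m = n, n+1. Then ℰⁿ⁺¹ − ℰⁿ = ½ ∫₀ᴸ (Eⁿ⁺¹(x) − Eⁿ(x))² dx; in particular the conservative Euler scheme commits an energy error of size ½‖Eⁿ⁺¹ − Eⁿ‖²_{L²}, which is O(τ²)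 per step and nonnegative. -/
open MeasureTheory Filter
open scoped Topology

/-- The conservative Euler scheme for Vlasov–Poisson, with kinetic energy update
`κⁿ⁺¹ = κⁿ − τ ∂ₓQⁿ − τ Eⁿ jⁿ`, commits exactly the energy error
`ℰⁿ⁺¹ − ℰⁿ = ½∫₀ᴸ (Eⁿ⁺¹ − Eⁿ)² dx`, which is nonnegative. -/
theorem cons_euler_energy_error
    (L τ : ℝ) (hL : 0 < L) (hτ : 0 < τ)
    (κn κn1 Qn φ En En1 ρn ρn1 j : ℝ → ℝ)
    (hκn : Continuous κn) (hκnper : Function.Periodic κn L)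
    (hκn1 : Continuous κn1) (hκn1per : Function.Periodic κn1 L)
    (hQn : ContDiff ℝ 1 Qn) (hQnper : Function.Periodic Qn L)
    (hupdate : ∀ x, κn1 x = κn x - τ * deriv Qn x - τ * (En x * j x))
    (hφ : ContDiff ℝ 2 φ) (hφper : Function.Periodic φ L)
    (hEn : ∀ x, En x = -(deriv φ x))
    (hEn1C1 : ContDiff ℝ 1 En1) (hEn1per : Function.Periodic En1 L)
    (hρn : Continuous ρn) (hρnper : Function.Periodic ρn L)
    (hρn1 : Continuous ρn1) (hρn1per : Function.Periodic ρn1 L)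
    (hPn : ∀ x, deriv En x = 1 - ρn x)
    (hPn1 : ∀ x, deriv En1 x = 1 - ρn1 x)
    (hjC1 : ContDiff ℝ 1 j) (hjper : Function.Periodic j L)
    (hcont : ∀ x, (ρn1 x - ρn x) / τ + deriv j x = 0) :
    ((∫ x in (0:ℝ)..L, κn1 x) + (1 / 2) * (∫ x in (0:ℝ)..L, (En1 x) ^ 2))
        - ((∫ x in (0:ℝ)..L, κn x) + (1 / 2) * (∫ x in (0:ℝ)..L, (En x) ^ 2))
      = (1 / 2) * (∫ x in (0:ℝ)..L, (En1 x - En x) ^ 2)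
    ∧ 0 ≤ (1 / 2) * (∫ x in (0:ℝ)..L, (En1 x - En x) ^ 2) := by

  have hφ2 : ContDiff ℝ (1+1) φ := by norm_num; exact hφ
  have hφ' : ContDiff ℝ 1 (deriv φ) := (contDiff_succ_iff_deriv.mp hφ2).2.2
  have hEnEq : En = fun x => -(deriv φ x) := funext hEn
  have hEnc : Continuous En := by rw [hEnEq]; exact hφ'.continuous.neg
  have hEnd : Differentiable ℝ En := by rw [hEnEq]; exact (hφ'.differentiable one_ne_zero).neg
  have hEn1c : Continuous En1 := hEn1C1.continuous
  have hEn1d : Differentiable ℝ En1 := hEn1C1.differentiable one_ne_zero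
  have hjc : Continuous j := hjC1.continuous
  have hjd : Differentiable ℝ j := hjC1.differentiable one_ne_zero
  have hQd : Differentiable ℝ Qn := hQn.differentiable one_ne_zero
  have hQ'c : Continuous (deriv Qn) := hQn.continuous_deriv le_rfl
  set c : ℝ := En1 0 - En 0 - τ * j 0 with hcdef
  have hgd : Differentiable ℝ (fun x => En1 x - En x - τ * j x) :=
    (hEn1d.sub hEnd).sub (hjd.const_mul τ)
  have hg0 : ∀ x, deriv (fun x => En1 x - En x - τ * j x) x = 0 := by
    intro x
    have h1 : HasDerivAt (fun x => En1 x - En x - τ * j x)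
        (deriv En1 x - deriv En x - τ * deriv j x) x :=
      (((hEn1d x).hasDerivAt.sub (hEnd x).hasDerivAt)).sub ((hjd x).hasDerivAt.const_mul τ)
    rw [h1.deriv, hPn x, hPn1 x]
    have h2 := hcont x
    have hτ' : τ ≠ 0 := ne_of_gt hτ
    field_simp at h2
    linarith
  have hc : ∀ x, En1 x - En x - τ * j x = c := fun x =>
    is_const_of_deriv_eq_zero hgd hg0 x 0
  -- integral of deriv Qn vanishes
  have hQint : (∫ x in (0:ℝ)..L, deriv Qn x) = 0 := by
    rw [intervalIntegral.integral_deriv_eq_sub (fun x _ => hQd x)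
      (hQ'c.intervalIntegrable 0 L)]
    have := hQnper 0
    rw [zero_add] at this
    rw [this]; ring
  -- integral of En vanishes
  have hEint : (∫ x in (0:ℝ)..L, En x) = 0 := by
    rw [hEnEq, intervalIntegral.integral_neg,
      intervalIntegral.integral_deriv_eq_sub (fun x _ => (hφ.differentiable two_ne_zero) x)
        (hφ'.continuous.intervalIntegrable 0 L)]
    have := hφper 0
    rw [zero_add] at this
    rw [this]; ring
  -- split the kinetic integral
  have hκint : (∫ x in (0:ℝ)..L, κn1 x)
      = (∫ x in (0:ℝ)..L, κn x) - τ * (∫ x in (0:ℝ)..L, deriv Qn x)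
        - τ * (∫ x in (0:ℝ)..L, En x * j x) := by
    rw [intervalIntegral.integral_congr (g := fun x => κn x - τ * deriv Qn x - τ * (En x * j x))
        (fun x _ => hupdate x),
      intervalIntegral.integral_sub (f := fun x => κn x - τ * deriv Qn x) (g := fun x => τ * (En x * j x))
        ((hκn.sub ((continuous_const.mul hQ'c))).intervalIntegrable 0 L)
        ((continuous_const.mul (hEnc.mul hjc)).intervalIntegrable 0 L),
      intervalIntegral.integral_sub (f := κn) (g := fun x => τ * deriv Qn x) (hκn.intervalIntegrable 0 L)
        ((continuous_const.mul hQ'c).intervalIntegrable 0 L),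
      intervalIntegral.integral_const_mul, intervalIntegral.integral_const_mul]
  -- split the error integral
  have hkey : (∫ x in (0:ℝ)..L, (En1 x - En x) ^ 2)
      = (∫ x in (0:ℝ)..L, (En1 x) ^ 2) - (∫ x in (0:ℝ)..L, (En x) ^ 2)
        - 2 * τ * (∫ x in (0:ℝ)..L, En x * j x) - 2 * c * (∫ x in (0:ℝ)..L, En x) := by
    have hptw : (∫ x in (0:ℝ)..L, (En1 x - En x) ^ 2)
        = ∫ x in (0:ℝ)..L,
            ((En1 x) ^ 2 - (En x) ^ 2 - 2 * τ * (En x * j x) - 2 * c * En x) :=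
      intervalIntegral.integral_congr (fun x _ => by linear_combination (-2 * En x) * hc x)
    rw [hptw,
      intervalIntegral.integral_sub
        (f := fun x => (En1 x) ^ 2 - (En x) ^ 2 - 2 * τ * (En x * j x)) (g := fun x => 2 * c * En x)
        (((((hEn1c.pow 2).sub (hEnc.pow 2)).sub
          (continuous_const.mul (hEnc.mul hjc)))).intervalIntegrable 0 L)
        ((continuous_const.mul hEnc).intervalIntegrable 0 L),
      intervalIntegral.integral_sub (f := fun x => (En1 x) ^ 2 - (En x) ^ 2) (g := fun x => 2 * τ * (En x * j x))
        (((hEn1c.pow 2).sub (hEnc.pow 2)).intervalIntegrable 0 L)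
        ((continuous_const.mul (hEnc.mul hjc)).intervalIntegrable 0 L),
      intervalIntegral.integral_sub (f := fun x => (En1 x) ^ 2) (g := fun x => (En x) ^ 2) ((hEn1c.pow 2).intervalIntegrable 0 L)
        ((hEnc.pow 2).intervalIntegrable 0 L),
      intervalIntegral.integral_const_mul, intervalIntegral.integral_const_mul]
  have hnn : 0 ≤ (1 / 2 : ℝ) * (∫ x in (0:ℝ)..L, (En1 x - En x) ^ 2) := by
    have : (0:ℝ) ≤ ∫ x in (0:ℝ)..L, (En1 x - En x) ^ 2 := intervalIntegral.integral_nonneg (le_of_lt hL)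
      (fun x _ => sq_nonneg (En1 x - En x))
    linarith
  refine ⟨?_, hnn⟩
  rw [hκint, hQint, hkey, hEint]
  ring
end

section
/- Let L > 0 and τ > 0. Let κⁿ, κⁿ⁺¹ : ℝ/Lℤ → ℝ be continuous, Qⁿ : ℝ/Lℤ → ℝ be C¹, and suppose the midpoint kinetic energy update κⁿ⁺¹(x) = κⁿ(x) − τ ∂ₓQⁿ(x) − τ · ½(Eⁿ(x) + Eⁿ⁺¹(x)) jⁿ(x) holds. Let φⁿ, φⁿ⁺¹ : ℝ/Lℤ → ℝ be C² with Eⁿ = −∂ₓφⁿ and Eⁿ⁺¹ = −∂ₓφⁿ⁺¹, suppose ∂ₓEⁿ = 1 − ρⁿ and ∂ₓEⁿ⁺¹ = 1 − ρⁿ⁺¹ for continuous ρⁿ, ρⁿ⁺¹, let jⁿ be C¹, and suppose (ρⁿ⁺¹ − ρⁿ)/τ + ∂ₓjⁿ = 0. Then ∫₀ᴸ κⁿ⁺¹(x) dx + ½ ∫₀ᴸ Eⁿ⁺¹(x)² dx = ∫₀ᴸ κⁿ(x) dx + ½ ∫₀ᴸ Eⁿ(x)² dx, i.e. the scheme using the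 time-averaged field E^{n+1/2} = (Eⁿ + Eⁿ⁺¹)/2 in the kinetic update conserves the total energy exactly. -/
open MeasureTheory Filter
open scoped Topology

/-- The scheme using the time-averaged electric field `E^{n+1/2} = (Eⁿ + Eⁿ⁺¹)/2` in the
kinetic energy update `κⁿ⁺¹ = κⁿ − τ ∂ₓQⁿ − τ E^{n+1/2} jⁿ` conserves the total energy
`∫₀ᴸ κ dx + ½∫₀ᴸ E² dx` exactly. -/
theorem cons_midpoint_energy_conservation
    (L τ : ℝ) (hL : 0 < L) (hτ : 0 < τ)
    (κn κn1 Qn φn φn1 En En1 ρn ρn1 j : ℝ → ℝ)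
    (hκn : Continuous κn) (hκnper : Function.Periodic κn L)
    (hκn1 : Continuous κn1) (hκn1per : Function.Periodic κn1 L)
    (hQn : ContDiff ℝ 1 Qn) (hQnper : Function.Periodic Qn L)
    (hupdate : ∀ x, κn1 x = κn x - τ * deriv Qn x
      - τ * ((1 / 2) * (En x + En1 x) * j x))
    (hφn : ContDiff ℝ 2 φn) (hφnper : Function.Periodic φn L)
    (hφn1 : ContDiff ℝ 2 φn1) (hφn1per : Function.Periodic φn1 L)
    (hEn : ∀ x, En x = -(deriv φn x))
    (hEn1 : ∀ x, En1 x = -(deriv φn1 x))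
    (hρn : Continuous ρn) (hρnper : Function.Periodic ρn L)
    (hρn1 : Continuous ρn1) (hρn1per : Function.Periodic ρn1 L)
    (hPn : ∀ x, deriv En x = 1 - ρn x)
    (hPn1 : ∀ x, deriv En1 x = 1 - ρn1 x)
    (hjC1 : ContDiff ℝ 1 j) (hjper : Function.Periodic j L)
    (hcont : ∀ x, (ρn1 x - ρn x) / τ + deriv j x = 0) :
    (∫ x in (0:ℝ)..L, κn1 x) + (1 / 2) * (∫ x in (0:ℝ)..L, (En1 x) ^ 2)
      = (∫ x in (0:ℝ)..L, κn x) + (1 / 2) * (∫ x in (0:ℝ)..L, (En x) ^ 2) := by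
  -- basic regularity
  have hφn' : ContDiff ℝ 1 (deriv φn) := by
    have h2 : ContDiff ℝ ((1 : ℕ) + 1) φn := by exact_mod_cast hφn
    exact (contDiff_succ_iff_deriv.mp h2).2.2
  have hφn1' : ContDiff ℝ 1 (deriv φn1) := by
    have h2 : ContDiff ℝ ((1 : ℕ) + 1) φn1 := by exact_mod_cast hφn1
    exact (contDiff_succ_iff_deriv.mp h2).2.2
  have hEnfun : En = fun x => -(deriv φn x) := funext hEn
  have hEn1fun : En1 = fun x => -(deriv φn1 x) := funext hEn1
  have cEn : Continuous En := by rw [hEnfun]; exact hφn'.continuous.neg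
  have cEn1 : Continuous En1 := by rw [hEn1fun]; exact hφn1'.continuous.neg
  have dEn : Differentiable ℝ En := by
    rw [hEnfun]; exact (hφn'.differentiable one_ne_zero).neg
  have dEn1 : Differentiable ℝ En1 := by
    rw [hEn1fun]; exact (hφn1'.differentiable one_ne_zero).neg
  have dj : Differentiable ℝ j := hjC1.differentiable one_ne_zero
  have cj : Continuous j := hjC1.continuous
  -- the function g = En1 - En - τ j is constant
  set g : ℝ → ℝ := fun x => En1 x - En x - τ * j x with hgdef
  have hgd : ∀ x, HasDerivAt g 0 x := by
    intro x
    have h := ((dEn1 x).hasDerivAt.sub (dEn x).hasDerivAt).sub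
      (((dj x).hasDerivAt).const_mul τ)
    have e : deriv En1 x - deriv En x - τ * deriv j x = 0 := by
      have hc := hcont x
      rw [hPn, hPn1]
      field_simp at hc
      linarith
    rw [e] at h
    exact h
  have hconst : ∀ x, g x = g 0 := fun x =>
    is_const_of_deriv_eq_zero (fun y => (hgd y).differentiableAt) (fun y => (hgd y).deriv) x 0
  set c : ℝ := g 0 with hcdef
  have hdiff : ∀ x, En1 x - En x = τ * j x + c := by
    intro x
    have := hconst x
    simp only [hgdef] at this
    linarith
  -- integrals of derivatives vanish by periodicity
  have IQ : (∫ x in (0:ℝ)..L, deriv Qn x) = 0 := by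
    rw [intervalIntegral.integral_deriv_eq_sub
      (fun x _ => (hQn.differentiable one_ne_zero) x)
      ((hQn.continuous_deriv le_rfl).intervalIntegrable 0 L)]
    have := hQnper 0
    rw [zero_add] at this
    rw [this]; ring
  have IEn : (∫ x in (0:ℝ)..L, En x) = 0 := by
    rw [hEnfun, intervalIntegral.integral_neg,
      intervalIntegral.integral_deriv_eq_sub
        (fun x _ => (hφn.differentiable (by norm_num)) x)
        ((hφn.continuous_deriv (by norm_num)).intervalIntegrable 0 L)]
    have := hφnper 0
    rw [zero_add] at this
    rw [this]; ring
  have IEn1 : (∫ x in (0:ℝ)..L, En1 x) = 0 := by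
    rw [hEn1fun, intervalIntegral.integral_neg,
      intervalIntegral.integral_deriv_eq_sub
        (fun x _ => (hφn1.differentiable (by norm_num)) x)
        ((hφn1.continuous_deriv (by norm_num)).intervalIntegrable 0 L)]
    have := hφn1per 0
    rw [zero_add] at this
    rw [this]; ring
  -- notation for the midpoint work term
  set h : ℝ → ℝ := fun x => (1 / 2) * (En x + En1 x) * j x with hhdef
  have ch : Continuous h := by rw [hhdef]; fun_prop
  have cQ' : Continuous (deriv Qn) := hQn.continuous_deriv le_rfl
  -- kinetic part
  have Iκ : (∫ x in (0:ℝ)..L, κn1 x)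
      = (∫ x in (0:ℝ)..L, κn x) - τ * (∫ x in (0:ℝ)..L, h x) := by
    have : (∫ x in (0:ℝ)..L, κn1 x)
        = ∫ x in (0:ℝ)..L, (κn x - τ * deriv Qn x - τ * h x) := by
      apply intervalIntegral.integral_congr
      intro x _
      simpa [hhdef] using hupdate x
    rw [this, intervalIntegral.integral_sub, intervalIntegral.integral_sub,
      intervalIntegral.integral_const_mul, intervalIntegral.integral_const_mul, IQ]
    all_goals first
      | (apply Continuous.intervalIntegrable; fun_prop)
      | ring
  -- field part
  have IE : (1 / 2) * (∫ x in (0:ℝ)..L, (En1 x) ^ 2)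
      = (1 / 2) * (∫ x in (0:ℝ)..L, (En x) ^ 2)
        + τ * (∫ x in (0:ℝ)..L, h x)
        + (c / 2) * ((∫ x in (0:ℝ)..L, En x) + (∫ x in (0:ℝ)..L, En1 x)) := by
    have hpoint : ∀ x, (1 / 2) * (En1 x) ^ 2
        = (1 / 2) * (En x) ^ 2 + τ * h x + (c / 2) * (En x + En1 x) := by
      intro x
      have hx := hdiff x
      simp only [hhdef]
      linear_combination ((1 : ℝ) / 2) * (En x + En1 x) * hx
    have : (∫ x in (0:ℝ)..L, (1 / 2) * (En1 x) ^ 2)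
        = ∫ x in (0:ℝ)..L,
            ((1 / 2) * (En x) ^ 2 + τ * h x + (c / 2) * (En x + En1 x)) := by
      apply intervalIntegral.integral_congr
      intro x _
      exact hpoint x
    rw [intervalIntegral.integral_const_mul] at this
    rw [this, intervalIntegral.integral_add, intervalIntegral.integral_add,
      intervalIntegral.integral_const_mul, intervalIntegral.integral_const_mul,
      intervalIntegral.integral_const_mul, intervalIntegral.integral_add]
    all_goals first
      | (apply Continuous.intervalIntegrable; fun_prop)
      | ring
  rw [Iκ, IE, IEn, IEn1]
  ring
end

section
/- Let (Ω_x, ν) be a measure space, f₀ᵥ : ℝ → (0,∞) a measurable weight, and ⟨g,h⟩ᵥ = ∫_ℝ f₀ᵥ g h dv. Let V₁, …, V_r be weighted-orthonormal in L²(ℝ, f₀ᵥ dv), write U_a = V_a for 1 ≤ a ≤ m and W_p = V_p for m < p ≤ r. Let X₁, …, X_r ∈ L²(ν), let S ∈ ℝ^{r×r} with SᵀS invertible, let τ > 0, and let D : Ω_x × ℝ → ℝ be such that D is ν ⊗ dv-integrable, for a.e. v the function x ↦ X_i(x) D(x,v) is ν-integrable with ∫ X_i D dν integrable in v, and X_i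 V_l D and X_i U_a D are ν ⊗ dv-integrable for all i, l, a (where the v-integrals are with respect to Lebesgue measure, the pairing ⟨(1/f₀ᵥ)g, h⟩ᵥ reducing to ∫ g h dv). Define the conservative Euler update W_p' = W_p + τ Σ_{q=m+1}^r Σ_{i=1}^r ((SᵀS)⁻¹)_{pq} S_{iq} [ (1/f₀ᵥ(v)) ∫_{Ω_x} X_i(x) D(x,v) dν(x) − Σ_{l=1}^r (∫∫ X_i V_l D dν dv) V_l(v) ]. Then ⟨W_p', U_a⟩ᵥ = 0 for all m < p ≤ r and 1 ≤ a ≤ m. -/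
open MeasureTheory Filter
open scoped Topology

/-- The explicit conservative Euler update of the evolving velocity basis functions
`W_p` (p > m) stays orthogonal, in the weighted inner product
`⟨g,h⟩ᵥ = ∫ f₀ᵥ g h dv`, to the fixed conservation basis functions `U_a = V_a` (a ≤ m). -/
theorem cons_euler_W_orthogonality
    {Ωx : Type*} [MeasurableSpace Ωx] (ν : Measure Ωx)
    (f0v : ℝ → ℝ) (hf0pos : ∀ v, 0 < f0v v) (hf0meas : Measurable f0v)
    (r m : ℕ) (hm : m ≤ r)
    (V : Fin r → ℝ → ℝ)
    (hV2 : ∀ j, MemLp (V j) 2 (volume.withDensity fun v => ENNReal.ofReal (f0v v)))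
    (hVortho : ∀ i j, (∫ v : ℝ, f0v v * V i v * V j v) = if i = j then 1 else 0)
    (X : Fin r → Ωx → ℝ) (hX2 : ∀ i, MemLp (X i) 2 ν)
    (S : Matrix (Fin r) (Fin r) ℝ) (hS : IsUnit (S.transpose * S).det)
    (τ : ℝ) (hτ : 0 < τ)
    (D : Ωx → ℝ → ℝ)
    (hD : Integrable (fun z : Ωx × ℝ => D z.1 z.2) (ν.prod volume))
    (hXD : ∀ i, ∀ᵐ v : ℝ, Integrable (fun x => X i x * D x v) ν)
    (hXDint : ∀ i, Integrable (fun v : ℝ => ∫ x, X i x * D x v ∂ν))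
    (hXVD : ∀ i l, Integrable
      (fun z : Ωx × ℝ => X i z.1 * V l z.2 * D z.1 z.2) (ν.prod volume))
    (W' : Fin r → ℝ → ℝ)
    (hW' : ∀ p : Fin r, m ≤ (p : ℕ) → ∀ v, W' p v = V p v
      + τ * ∑ q ∈ Finset.univ.filter (fun q : Fin r => m ≤ (q : ℕ)), ∑ i,
          (S.transpose * S)⁻¹ p q * S i q *
            ((1 / f0v v) * (∫ x, X i x * D x v ∂ν)
              - ∑ l, (∫ z : Ωx × ℝ, X i z.1 * V l z.2 * D z.1 z.2 ∂(ν.prod volume))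
                  * V l v)) :
    ∀ p : Fin r, m ≤ (p : ℕ) → ∀ a : Fin r, (a : ℕ) < m →
      (∫ v : ℝ, f0v v * W' p v * V a v) = 0 := by
  intro p hp a ha
  have hpa : p ≠ a := by
    intro h
    rw [h] at hp
    omega
  -- integrability of weighted products of basis functions
  have hVint : ∀ i j : Fin r, Integrable (fun v => f0v v * V i v * V j v) volume := by
    intro i j
    have h1 : MemLp (V i • V j) 1
        (volume.withDensity fun v => ENNReal.ofReal (f0v v)) :=
      (hV2 j).smul (hV2 i) (hpqr := ⟨by rw [ENNReal.inv_two_add_inv_two, inv_one]⟩)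
    have h2 : Integrable (fun v => V i v * V j v)
        (volume.withDensity fun v => ENNReal.ofReal (f0v v)) :=
      memLp_one_iff_integrable.mp h1
    rw [integrable_withDensity_iff (hf0meas.ennreal_ofReal)
      (Eventually.of_forall fun v => ENNReal.ofReal_lt_top)] at h2
    refine h2.congr (Eventually.of_forall fun v => ?_)
    show V i v * V j v * (ENNReal.ofReal (f0v v)).toReal = f0v v * V i v * V j v
    rw [ENNReal.toReal_ofReal (hf0pos v).le]
    ring
  have horth : ∀ i j : Fin r, i ≠ j → (∫ v : ℝ, f0v v * V i v * V j v) = 0 := by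
    intro i j hij
    rw [hVortho]
    simp [hij]
  -- a σ-finite carrier set for all the X i
  have hXXint : Integrable (fun x => ∑ i : Fin r, X i x * X i x) ν := by
    refine integrable_finset_sum _ fun i _ => ?_
    exact memLp_one_iff_integrable.mp
      ((hX2 i).smul (hX2 i) (hpqr := ⟨by rw [ENNReal.inv_two_add_inv_two, inv_one]⟩))
  obtain ⟨t, htm, ht0, htsig⟩ := hXXint.aefinStronglyMeasurable.exists_set_sigmaFinite
  haveI : SigmaFinite (ν.restrict t) := htsig
  have hX0 : ∀ i : Fin r, (X i) =ᵐ[ν.restrict tᶜ] 0 := by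
    intro i
    filter_upwards [ht0] with x hx
    have hnn : ∀ j ∈ (Finset.univ : Finset (Fin r)), 0 ≤ X j x * X j x :=
      fun j _ => mul_self_nonneg _
    have hx' : (∑ j : Fin r, X j x * X j x) = 0 := hx
    have := (Finset.sum_eq_zero_iff_of_nonneg hnn).mp hx' i (Finset.mem_univ i)
    have : X i x = 0 := by nlinarith [this]
    simpa using this
  -- product of restricted measure
  have hprod_restrict : (ν.restrict t).prod (volume : Measure ℝ)
      = (ν.prod volume).restrict (t ×ˢ Set.univ) := by
    ext s hs
    rw [Measure.prod_apply hs, Measure.restrict_apply hs,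
      Measure.prod_apply (hs.inter (htm.prod MeasurableSet.univ)),
      ← lintegral_indicator htm]
    congr 1
    funext x
    classical
    by_cases hx : x ∈ t
    · have : Prod.mk x ⁻¹' (s ∩ t ×ˢ Set.univ) = Prod.mk x ⁻¹' s := by
        ext y; simp [hx]
      rw [Set.indicator_of_mem hx, this]
    · have : Prod.mk x ⁻¹' (s ∩ t ×ˢ Set.univ) = (∅ : Set ℝ) := by
        ext y; simp [hx]
      rw [Set.indicator_of_notMem hx, this]
      simp
  -- the integrand is a.e. zero off t ×ˢ univ
  have hae0 : ∀ i l : Fin r,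
      (fun z : Ωx × ℝ => X i z.1 * V l z.2 * D z.1 z.2)
        =ᵐ[(ν.prod volume).restrict ((t ×ˢ Set.univ : Set (Ωx × ℝ))ᶜ)] 0 := by
    intro i l
    have h1 : ν.restrict tᶜ {x | X i x ≠ 0} = 0 := by
      have := hX0 i
      rw [EventuallyEq, ae_iff] at this
      simpa using this
    set N := toMeasurable (ν.restrict tᶜ) {x | X i x ≠ 0} with hN
    have hNm : MeasurableSet N := measurableSet_toMeasurable _ _
    have hNsub : {x | X i x ≠ 0} ⊆ N := subset_toMeasurable _ _
    have hN0 : ν.restrict tᶜ N = 0 := by rw [hN, measure_toMeasurable]; exact h1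
    have hN0' : ν (N ∩ tᶜ) = 0 := by rwa [Measure.restrict_apply hNm] at hN0
    have hprodnull : (ν.prod volume) ((N ∩ tᶜ) ×ˢ (Set.univ : Set ℝ)) = 0 := by
      rw [Measure.prod_prod, hN0', zero_mul]
    rw [EventuallyEq, ae_iff,
      Measure.restrict_apply' ((htm.prod MeasurableSet.univ).compl)]
    refine measure_mono_null (fun z hz => ?_) hprodnull
    obtain ⟨hz1, hz2⟩ := hz
    simp only [Set.mem_setOf_eq, Pi.zero_apply] at hz1
    have hXz : X i z.1 ≠ 0 := by
      intro h
      exact hz1 (by rw [h]; ring)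
    have hz1' : z.1 ∈ N := hNsub hXz
    have hz2' : z.1 ∉ t := by
      intro hmem
      exact hz2 ⟨hmem, Set.mem_univ _⟩
    exact ⟨⟨hz1', hz2'⟩, Set.mem_univ _⟩
  -- integrability over the restricted product, and equality of the double integrals
  have hXVD' : ∀ i l : Fin r, Integrable
      (fun z : Ωx × ℝ => X i z.1 * V l z.2 * D z.1 z.2)
      ((ν.restrict t).prod volume) := by
    intro i l
    rw [hprod_restrict]
    exact (hXVD i l).integrableOn
  have hBval : ∀ i l : Fin r,
      (∫ z : Ωx × ℝ, X i z.1 * V l z.2 * D z.1 z.2 ∂(ν.prod volume))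
        = ∫ z : Ωx × ℝ, X i z.1 * V l z.2 * D z.1 z.2 ∂((ν.restrict t).prod volume) := by
    intro i l
    rw [hprod_restrict]
    have hsplit := integral_add_compl (μ := ν.prod volume)
      (htm.prod MeasurableSet.univ) (hXVD i l)
    have hzero : (∫ z in ((t ×ˢ Set.univ : Set (Ωx × ℝ)))ᶜ,
        X i z.1 * V l z.2 * D z.1 z.2 ∂(ν.prod volume)) = 0 :=
      integral_eq_zero_of_ae (hae0 i l)
    rw [← hsplit, hzero, add_zero]
  -- the x-integrals over ν and over ν.restrict t agree for a.e. v
  have hFrestrict : ∀ i : Fin r, ∀ᵐ v : ℝ,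
      (∫ x, X i x * D x v ∂ν) = ∫ x, X i x * D x v ∂(ν.restrict t) := by
    intro i
    filter_upwards [hXD i] with v hv
    have hsplit := integral_add_compl (μ := ν) htm hv
    have hzero : (∫ x in tᶜ, X i x * D x v ∂ν) = 0 := by
      refine integral_eq_zero_of_ae ?_
      filter_upwards [hX0 i] with x hx
      simp [hx]
    rw [← hsplit, hzero, add_zero]
  -- abbreviation for the coefficients
  set B : Fin r → Fin r → ℝ := fun i l =>
    ∫ z : Ωx × ℝ, X i z.1 * V l z.2 * D z.1 z.2 ∂(ν.prod volume) with hB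
  have hinner : ∀ i : Fin r, ∀ v : ℝ,
      (∫ x, X i x * V a v * D x v ∂(ν.restrict t))
        = (∫ x, X i x * D x v ∂(ν.restrict t)) * V a v := by
    intro i v
    have h : (fun x => X i x * V a v * D x v) = fun x => V a v * (X i x * D x v) := by
      funext x; ring
    rw [h, integral_const_mul, mul_comm]
  have hFVa_int : ∀ i : Fin r,
      Integrable (fun v => (∫ x, X i x * D x v ∂ν) * V a v) volume := by
    intro i
    have h1 := (hXVD' i a).integral_prod_right
    refine h1.congr ?_
    filter_upwards [hFrestrict i] with v hv
    rw [hinner i v, ← hv]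
  have hFVa_val : ∀ i : Fin r,
      (∫ v : ℝ, (∫ x, X i x * D x v ∂ν) * V a v) = B i a := by
    intro i
    have h1 : (∫ v : ℝ, (∫ x, X i x * D x v ∂ν) * V a v)
        = ∫ v : ℝ, ∫ x, X i x * V a v * D x v ∂(ν.restrict t) := by
      refine integral_congr_ae ?_
      filter_upwards [hFrestrict i] with v hv
      rw [hinner i v, ← hv]
    rw [h1]
    have h2 : B i a = ∫ z : Ωx × ℝ, X i z.1 * V a z.2 * D z.1 z.2
        ∂((ν.restrict t).prod volume) := by
      rw [hB]
      exact hBval i a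
    rw [h2]
    exact (integral_prod_symm _ (hXVD' i a)).symm
  -- the filtered index set
  set Q := Finset.univ.filter (fun q : Fin r => m ≤ (q : ℕ)) with hQ
  -- pointwise expansion of the integrand
  have key : ∀ v : ℝ, f0v v * W' p v * V a v
      = f0v v * V p v * V a v
        + ∑ q ∈ Q, ∑ i, (τ * ((S.transpose * S)⁻¹ p q * S i q)) *
            ((∫ x, X i x * D x v ∂ν) * V a v
              - ∑ l, B i l * (f0v v * V l v * V a v)) := by
    intro v
    have h0 : f0v v ≠ 0 := (hf0pos v).ne'
    rw [hW' p hp v, mul_add, add_mul]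
    congr 1
    simp only [Finset.mul_sum, Finset.sum_mul]
    refine Finset.sum_congr rfl fun q _ => ?_
    refine Finset.sum_congr rfl fun i _ => ?_
    have hs : (∑ l, B i l * (f0v v * V l v * V a v))
        = f0v v * V a v * ∑ l, B i l * V l v := by
      rw [Finset.mul_sum]
      exact Finset.sum_congr rfl fun l _ => by ring
    rw [hs, hB]
    field_simp
  -- integrability of each summand
  have hterm_int : ∀ q ∈ Q, ∀ i : Fin r,
      Integrable (fun v => (τ * ((S.transpose * S)⁻¹ p q * S i q)) *
        ((∫ x, X i x * D x v ∂ν) * V a v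
          - ∑ l, B i l * (f0v v * V l v * V a v))) volume := by
    intro q _ i
    exact (((hFVa_int i).sub
      (integrable_finset_sum _ fun l _ => (hVint l a).const_mul (B i l))).const_mul _)
  -- now compute the integral
  calc (∫ v : ℝ, f0v v * W' p v * V a v)
      = ∫ v : ℝ, (f0v v * V p v * V a v
          + ∑ q ∈ Q, ∑ i, (τ * ((S.transpose * S)⁻¹ p q * S i q)) *
              ((∫ x, X i x * D x v ∂ν) * V a v
                - ∑ l, B i l * (f0v v * V l v * V a v))) :=
        integral_congr_ae (Eventually.of_forall key)
    _ = (∫ v : ℝ, f0v v * V p v * V a v)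
          + ∫ v : ℝ, ∑ q ∈ Q, ∑ i, (τ * ((S.transpose * S)⁻¹ p q * S i q)) *
              ((∫ x, X i x * D x v ∂ν) * V a v
                - ∑ l, B i l * (f0v v * V l v * V a v)) := by
        refine integral_add (hVint p a) ?_
        exact integrable_finset_sum _ fun q hq =>
          integrable_finset_sum _ fun i _ => hterm_int q hq i
    _ = 0 := by
        rw [horth p a hpa, zero_add]
        rw [integral_finset_sum _ fun q hq =>
          integrable_finset_sum _ fun i _ => hterm_int q hq i]
        refine Finset.sum_eq_zero fun q hq => ?_
        rw [integral_finset_sum _ fun i _ => hterm_int q hq i]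
        refine Finset.sum_eq_zero fun i _ => ?_
        rw [integral_const_mul]
        have hsub : (∫ v : ℝ, ((∫ x, X i x * D x v ∂ν) * V a v
            - ∑ l, B i l * (f0v v * V l v * V a v)))
            = (∫ v : ℝ, (∫ x, X i x * D x v ∂ν) * V a v)
              - ∫ v : ℝ, ∑ l, B i l * (f0v v * V l v * V a v) :=
          integral_sub (hFVa_int i)
            (integrable_finset_sum _ fun l _ => (hVint l a).const_mul (B i l))
        rw [hsub, hFVa_val i,
          integral_finset_sum _ fun l _ => (hVint l a).const_mul (B i l)]
        have hsum : (∑ l, ∫ v : ℝ, B i l * (f0v v * V l v * V a v)) = B i a := by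
          have hEach : ∀ l : Fin r, (∫ v : ℝ, B i l * (f0v v * V l v * V a v))
              = B i l * if l = a then 1 else 0 := by
            intro l
            rw [integral_const_mul, ← hVortho l a]
          simp only [hEach, mul_ite, mul_one, mul_zero]
          simp
        rw [hsum, sub_self, mul_zero]
end
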